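/- arXiv:1307.2670 — 6 statements merged into one kernel-verified Lean document; each statement's English description precedes it below -/
import Mathlib

section
/- For every nonnegative integer k and every complex number λ with Re λ > 0, |e_k(λ)| ≤ (|λ|/Re λ)^{k+1} e_k(Re λ), where e_k(λ) = e^λ − Σ_{j=0}^k λ^j/j!. -/
/-!
Taylor's formula with integral remainder, applied to `t ↦ exp (λ t)` on `[0, 1]`, gives
`e_k(λ) = ∫₀¹ (1 - t)^k / k! · λ^{k+1} e^{λ t} dt`. Bounding the integrand by its norm replaces
`λ^{k+1} e^{λ t}` with `|λ|^{k+1} e^{t Re λ}`, which is `(|λ| / Re λ)^{k+1}` times the integrand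
of the same formula for the real number `Re λ`.
-/

/-- The truncated exponential `e_k(λ) = e^λ − Σ_{j=0}^k λ^j/j!`. -/
noncomputable def ek (k : ℕ) (l : ℂ) : ℂ :=
  Complex.exp l - ∑ j ∈ Finset.range (k + 1), l ^ j / (Nat.factorial j)

/-- The real truncated exponential. -/
noncomputable def ekR (k : ℕ) (x : ℝ) : ℝ :=
  Real.exp x - ∑ j ∈ Finset.range (k + 1), x ^ j / (Nat.factorial j)

open Complex Set
open scoped Interval

theorem contDiff_cexp_const_mul_ofReal (n : WithTop ℕ∞) (c : ℂ) :
    ContDiff ℝ n (fun t : ℝ => cexp (c * t)) :=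
  (contDiff_const.mul ofRealCLM.contDiff).cexp

theorem iteratedDeriv_cexp_const_mul_ofReal (n : ℕ) (c : ℂ) :
    iteratedDeriv n (fun t : ℝ => cexp (c * t)) = fun t : ℝ => c ^ n * cexp (c * t) := by
  induction n with
  | zero => simp
  | succ n ih =>
    ext t
    rw [iteratedDeriv_succ, ih]
    have := (((hasDerivAt_id (t : ℂ)).const_mul c).cexp.const_mul (c ^ n)).comp_ofReal
    simp only [mul_one, id] at this
    rw [this.deriv, pow_succ]
    ring

theorem iteratedDerivWithin_uIcc_cexp_const_mul_ofReal (n : ℕ) (c : ℂ) {a b t : ℝ} (hab : a ≠ b)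
    (ht : t ∈ [[a, b]]) :
    iteratedDerivWithin n (fun t : ℝ => cexp (c * t)) [[a, b]] t = c ^ n * cexp (c * t) := by
  rw [iteratedDerivWithin_eq_iteratedDeriv (uniqueDiffOn_uIcc hab)
    ((contDiff_cexp_const_mul_ofReal _ c).contDiffAt) ht, iteratedDeriv_cexp_const_mul_ofReal]

theorem ek_eq_integral (k : ℕ) (l : ℂ) :
    ek k l = ∫ t in (0 : ℝ)..1, ((1 - t) ^ k / k.factorial : ℝ) • (l ^ (k + 1) * cexp (l * t)) := by
  have htaylor := taylor_integral_remainder (f := fun t : ℝ => cexp (l * t)) (x₀ := 0) (x := 1)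
    (n := k) (contDiff_cexp_const_mul_ofReal _ l).contDiffOn
  have hderiv := fun n t ↦ iteratedDerivWithin_uIcc_cexp_const_mul_ofReal n l (t := t) zero_ne_one
  rw [taylor_within_apply] at htaylor
  rw [ek]
  convert htaylor using 1
  · congr 1
    · simp
    · refine Finset.sum_congr rfl fun j _ ↦ ?_
      rw [hderiv j 0 left_mem_uIcc]
      simp [div_eq_inv_mul]
  · exact intervalIntegral.integral_congr fun t ht ↦ by simp only [hderiv _ t ht]

theorem ofReal_ekR (k : ℕ) (x : ℝ) : (ekR k x : ℂ) = ek k x := by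
  simp [ekR, ek]

theorem ekR_eq_integral (k : ℕ) (x : ℝ) :
    ekR k x = ∫ t in (0 : ℝ)..1, (1 - t) ^ k / k.factorial * (x ^ (k + 1) * Real.exp (x * t)) := by
  apply ofReal_injective
  rw [ofReal_ekR, ek_eq_integral, ← intervalIntegral.integral_ofReal]
  push_cast
  simp [real_smul]

theorem norm_ek_le_integral (k : ℕ) (l : ℂ) :
    ‖ek k l‖ ≤
      ∫ t in (0 : ℝ)..1, (1 - t) ^ k / k.factorial * (‖l‖ ^ (k + 1) * Real.exp (l.re * t)) := by
  rw [ek_eq_integral]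
  refine (intervalIntegral.norm_integral_le_integral_norm zero_le_one).trans_eq
    (intervalIntegral.integral_congr fun t ht ↦ ?_)
  rw [uIcc_of_le zero_le_one] at ht
  have hw : 0 ≤ (1 - t) ^ k / k.factorial :=
    div_nonneg (pow_nonneg (sub_nonneg.2 ht.2) k) k.factorial.cast_nonneg
  rw [norm_smul, norm_mul, norm_pow, norm_exp, Real.norm_of_nonneg hw, re_mul_ofReal]

theorem statement_4 (k : ℕ) (l : ℂ) (hl : 0 < l.re) :
    ‖ek k l‖ ≤ (‖l‖ / l.re) ^ (k + 1) * ekR k l.re := by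
  calc ‖ek k l‖
      ≤ ∫ t in (0 : ℝ)..1, (1 - t) ^ k / k.factorial * (‖l‖ ^ (k + 1) * Real.exp (l.re * t)) :=
        norm_ek_le_integral k l
    _ = (‖l‖ / l.re) ^ (k + 1) * ekR k l.re := by
        rw [ekR_eq_integral, ← intervalIntegral.integral_const_mul]
        congr 1 with t
        rw [div_pow]
        field_simp [hl.ne']
end

section
/- Given 0 < p, a < ∞ and α real, there is a constant C > 0 such that ∫_{ℂⁿ} e^{p Re(z·w̄) − a|w|²} (1+|w|)^{−α} dV(w) ≤ C e^{p²|z|²/(4a)} (1+|z|)^{−α} for all z ∈ ℂⁿ. -/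
/-!
Completing the square, `p⟪z, w⟫ - a‖w‖² = p²‖z‖²/(4a) - a‖w - m‖²` with `m = (p/(2a)) z`,
turns the integrand into `exp(p²‖z‖²/(4a))` times a Gaussian centred at `m`. Peetre's inequality
`(1 + ‖w‖)^s ≤ (1 + ‖m‖)^s (1 + ‖w - m‖)^|s|` moves the weight to the centre, the remaining
integral of `exp(-a‖u‖²)(1 + ‖u‖)^|s|` is a finite constant by translation invariance, and
`(1 + ‖m‖)^s` is comparable to `(1 + ‖z‖)^s` because `‖m‖` is a fixed multiple of `‖z‖`.
-/

open MeasureTheory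

noncomputable instance (n : ℕ) : MeasurableSpace (EuclideanSpace ℂ (Fin n)) := borel _
instance (n : ℕ) : BorelSpace (EuclideanSpace ℂ (Fin n)) := ⟨rfl⟩

section Weight

variable {E : Type*} [SeminormedAddGroup E]

lemma one_add_norm_le_mul_one_add_norm_sub (x y : E) :
    1 + ‖x‖ ≤ (1 + ‖y‖) * (1 + ‖x - y‖) := by
  nlinarith [norm_le_norm_add_norm_sub' x y, norm_nonneg y, norm_nonneg (x - y)]

-- Peetre's inequality.
lemma one_add_norm_rpow_le (s : ℝ) (x y : E) :
    (1 + ‖x‖) ^ s ≤ (1 + ‖y‖) ^ s * (1 + ‖x - y‖) ^ |s| := by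
  have hx : 0 ≤ 1 + ‖x‖ := by positivity
  have hy : 0 ≤ 1 + ‖y‖ := by positivity
  have hxy : 0 < 1 + ‖x - y‖ := by positivity
  rcases le_or_gt 0 s with hs | hs
  · rw [abs_of_nonneg hs, ← Real.mul_rpow hy hxy.le]
    exact Real.rpow_le_rpow hx (one_add_norm_le_mul_one_add_norm_sub x y) hs
  · have hyx : 1 + ‖y‖ ≤ (1 + ‖x‖) * (1 + ‖x - y‖) := by
      simpa [norm_sub_rev] using one_add_norm_le_mul_one_add_norm_sub y x
    calc (1 + ‖x‖) ^ s = ((1 + ‖x‖) * (1 + ‖x - y‖)) ^ s * (1 + ‖x - y‖) ^ (-s) := by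
          rw [Real.mul_rpow hx hxy.le, mul_assoc, ← Real.rpow_add hxy, add_neg_cancel,
            Real.rpow_zero, mul_one]
      _ ≤ (1 + ‖y‖) ^ s * (1 + ‖x - y‖) ^ |s| := by
          rw [abs_of_neg hs]
          exact mul_le_mul_of_nonneg_right (Real.rpow_le_rpow_of_nonpos (by positivity) hyx hs.le)
            (by positivity)

end Weight

lemma Real.rpow_le_rpow_abs_mul_rpow {u v K : ℝ} (hu : 0 < u) (hv : 0 < v)
    (huv : u ≤ K * v) (hvu : v ≤ K * u) (s : ℝ) : u ^ s ≤ K ^ |s| * v ^ s := by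
  have hK : 0 < K := pos_of_mul_pos_left (hv.trans_le hvu) hu.le
  rcases le_or_gt 0 s with hs | hs
  · rw [abs_of_nonneg hs, ← Real.mul_rpow hK.le hv.le]
    exact Real.rpow_le_rpow hu.le huv hs
  · have hvKu : K⁻¹ * v ≤ u := by rwa [inv_mul_le_iff₀ hK]
    calc u ^ s ≤ (K⁻¹ * v) ^ s := Real.rpow_le_rpow_of_nonpos (by positivity) hvKu hs.le
      _ = K ^ |s| * v ^ s := by
        rw [Real.mul_rpow (by positivity) hv.le, Real.inv_rpow hK.le, ← Real.rpow_neg hK.le,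
          abs_of_neg hs]

lemma one_add_mul_rpow_le {c : ℝ} (hc : 0 < c) {t : ℝ} (ht : 0 ≤ t) (s : ℝ) :
    (1 + c * t) ^ s ≤ (c + c⁻¹) ^ |s| * (1 + t) ^ s := by
  have hc_inv : c * c⁻¹ = 1 := mul_inv_cancel₀ hc.ne'
  have hK : 1 ≤ c + c⁻¹ := by
    rcases le_total 1 c with h | h
    · linarith [inv_pos.2 hc]
    · linarith [one_le_inv₀ hc |>.2 h]
  apply Real.rpow_le_rpow_abs_mul_rpow (by positivity) (by positivity)
  · nlinarith [inv_pos.2 hc]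
  · nlinarith [mul_nonneg hc.le ht, mul_nonneg (mul_nonneg hc.le hc.le) ht]

lemma one_add_rpow_le_exp {b : ℝ} (hb : 0 < b) (s : ℝ) {t : ℝ} (ht : 0 ≤ t) :
    (1 + t) ^ s ≤ Real.exp (b * t ^ 2 + s ^ 2 / (4 * b)) := by
  calc (1 + t) ^ s ≤ (1 + t) ^ |s| := Real.rpow_le_rpow_of_exponent_le (by linarith) (le_abs_self s)
    _ ≤ Real.exp t ^ |s| := by gcongr; linarith [Real.add_one_le_exp t]
    _ = Real.exp (|s| * t) := by rw [← Real.exp_mul, mul_comm]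
    _ ≤ Real.exp (b * t ^ 2 + s ^ 2 / (4 * b)) := by
      gcongr
      have : b * t ^ 2 + s ^ 2 / (4 * b) - |s| * t = (2 * b * t - |s|) ^ 2 / (4 * b) := by
        field_simp
        linear_combination (-1 : ℝ) * sq_abs s
      rw [← sub_nonneg, this]
      positivity

section InnerProductSpace

variable {V : Type*} [NormedAddCommGroup V] [InnerProductSpace ℝ V]

open scoped RealInnerProductSpace

lemma mul_inner_sub_mul_sq_norm_eq {a : ℝ} (ha : a ≠ 0) (p : ℝ) (z w : V) :
    p * ⟪z, w⟫ - a * ‖w‖ ^ 2 = p ^ 2 * ‖z‖ ^ 2 / (4 * a) - a * ‖w - (p / (2 * a)) • z‖ ^ 2 := by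
  rw [norm_sub_sq_real, inner_smul_right, norm_smul, Real.norm_eq_abs, mul_pow, sq_abs,
    real_inner_comm]
  field_simp
  ring

lemma exp_mul_inner_sub_mul_sq_norm_mul_rpow_le {a : ℝ} (ha : a ≠ 0) (p s : ℝ) (z w : V) :
    Real.exp (p * ⟪z, w⟫ - a * ‖w‖ ^ 2) * (1 + ‖w‖) ^ s
      ≤ Real.exp (p ^ 2 * ‖z‖ ^ 2 / (4 * a)) * (1 + ‖(p / (2 * a)) • z‖) ^ s
        * (Real.exp (-a * ‖w - (p / (2 * a)) • z‖ ^ 2) * (1 + ‖w - (p / (2 * a)) • z‖) ^ |s|) := by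
  set m := (p / (2 * a)) • z
  rw [mul_inner_sub_mul_sq_norm_eq ha, sub_eq_add_neg, Real.exp_add, ← neg_mul]
  calc _ ≤ Real.exp (p ^ 2 * ‖z‖ ^ 2 / (4 * a)) * Real.exp (-a * ‖w - m‖ ^ 2)
        * ((1 + ‖m‖) ^ s * (1 + ‖w - m‖) ^ |s|) := by
        gcongr; exact one_add_norm_rpow_le s w m
    _ = _ := by ring

variable [FiniteDimensional ℝ V] [MeasurableSpace V] [BorelSpace V]

lemma integrable_exp_neg_mul_sq_norm {b : ℝ} (hb : 0 < b) :
    Integrable fun v : V => Real.exp (-b * ‖v‖ ^ 2) := by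
  refine (GaussianFourier.integrable_cexp_neg_mul_sq_norm_add (V := V) (b := b) (by simpa) 0 0).norm
    |>.congr (.of_forall fun v => ?_)
  simp only [Complex.norm_exp, neg_mul, Complex.neg_re, Complex.re_ofReal_mul, add_zero,
    zero_mul, inner_zero_left, Complex.ofReal_zero]
  norm_cast

lemma integrable_exp_neg_mul_sq_norm_mul_one_add_norm_rpow {b : ℝ} (hb : 0 < b) (s : ℝ) :
    Integrable fun v : V => Real.exp (-b * ‖v‖ ^ 2) * (1 + ‖v‖) ^ s := by
  refine ((integrable_exp_neg_mul_sq_norm (V := V) (half_pos hb)).const_mul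
    (Real.exp (s ^ 2 / (2 * b)))).mono' (by fun_prop) (.of_forall fun v => ?_)
  rw [Real.norm_of_nonneg (by positivity)]
  calc Real.exp (-b * ‖v‖ ^ 2) * (1 + ‖v‖) ^ s
      ≤ Real.exp (-b * ‖v‖ ^ 2) * Real.exp (b / 2 * ‖v‖ ^ 2 + s ^ 2 / (4 * (b / 2))) := by
        gcongr; exact one_add_rpow_le_exp (half_pos hb) s (norm_nonneg v)
    _ = Real.exp (s ^ 2 / (2 * b)) * Real.exp (-(b / 2) * ‖v‖ ^ 2) := by
        rw [← Real.exp_add, ← Real.exp_add]; ring_nf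

theorem exists_integral_exp_mul_inner_sub_mul_sq_norm_mul_rpow_le {p a : ℝ} (hp : p ≠ 0)
    (ha : 0 < a) (s : ℝ) :
    ∃ C : ℝ, 0 < C ∧ ∀ z : V,
      ∫ w, Real.exp (p * ⟪z, w⟫ - a * ‖w‖ ^ 2) * (1 + ‖w‖) ^ s
        ≤ C * Real.exp (p ^ 2 * ‖z‖ ^ 2 / (4 * a)) * (1 + ‖z‖) ^ s := by
  set c := p / (2 * a)
  have hc : 0 < |c| := abs_pos.2 (by positivity)
  set g : V → ℝ := fun u => Real.exp (-a * ‖u‖ ^ 2) * (1 + ‖u‖) ^ |s|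
  have hg : Integrable g := integrable_exp_neg_mul_sq_norm_mul_one_add_norm_rpow ha |s|
  have hg_pos : 0 < ∫ u, g u :=
    integral_pos_of_integrable_nonneg_nonzero (x := 0)
      ((by fun_prop : Continuous fun u : V => Real.exp (-a * ‖u‖ ^ 2)).mul
        ((by fun_prop : Continuous fun u : V => 1 + ‖u‖).rpow_const
          fun _ => .inr (abs_nonneg s))) hg
      (fun u => by positivity) (by simp [g])
  refine ⟨(|c| + |c|⁻¹) ^ |s| * ∫ u, g u, by positivity, fun z => ?_⟩
  calc ∫ w, Real.exp (p * ⟪z, w⟫ - a * ‖w‖ ^ 2) * (1 + ‖w‖) ^ s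
      ≤ ∫ w, Real.exp (p ^ 2 * ‖z‖ ^ 2 / (4 * a)) * (1 + ‖c • z‖) ^ s * g (w - c • z) :=
        integral_mono_of_nonneg (.of_forall fun w => by positivity)
          ((hg.comp_sub_right _).const_mul _)
          (.of_forall (exp_mul_inner_sub_mul_sq_norm_mul_rpow_le ha.ne' p s z))
    _ = Real.exp (p ^ 2 * ‖z‖ ^ 2 / (4 * a)) * (1 + |c| * ‖z‖) ^ s * ∫ u, g u := by
        rw [integral_const_mul, integral_sub_right_eq_self g, norm_smul, Real.norm_eq_abs]
    _ ≤ Real.exp (p ^ 2 * ‖z‖ ^ 2 / (4 * a)) * ((|c| + |c|⁻¹) ^ |s| * (1 + ‖z‖) ^ s)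
          * ∫ u, g u := by
        gcongr; exact one_add_mul_rpow_le hc (norm_nonneg z) s
    _ = (|c| + |c|⁻¹) ^ |s| * (∫ u, g u) * Real.exp (p ^ 2 * ‖z‖ ^ 2 / (4 * a))
          * (1 + ‖z‖) ^ s := by ring

end InnerProductSpace

lemma EuclideanSpace.real_inner_eq_re_inner {ι : Type*} [Fintype ι] (z w : EuclideanSpace ℂ ι) :
    inner ℝ z w = (inner ℂ z w).re := by
  simp [PiLp.inner_apply, Complex.re_sum, Complex.inner]

theorem statement_9 (n : ℕ) (p a α : ℝ) (hp : 0 < p) (ha : 0 < a) :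
    ∃ C : ℝ, 0 < C ∧ ∀ z : EuclideanSpace ℂ (Fin n),
      (∫ w : EuclideanSpace ℂ (Fin n),
          Real.exp (p * (inner ℂ z w : ℂ).re - a * ‖w‖ ^ 2) * (1 + ‖w‖) ^ (-α))
        ≤ C * Real.exp (p ^ 2 * ‖z‖ ^ 2 / (4 * a)) * (1 + ‖z‖) ^ (-α) := by
  simpa only [EuclideanSpace.real_inner_eq_re_inner] using
    exists_integral_exp_mul_inner_sub_mul_sq_norm_mul_rpow_le (V := EuclideanSpace ℂ (Fin n))
      hp.ne' ha (-α)
end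

section
/- Given 0 < p, a, ε < ∞ and α real with α ≠ 2n, there is a constant C > 0 such that ∫_{ℂⁿ} e^{pε|z||w| − a|w|²} (1+|w|)^{−α} dV(w) ≤ C e^{p²ε²|z|²/(4a)} (1 + |z|^{2n−α}) for all z ∈ ℂⁿ. -/
open MeasureTheory

/-! In polar coordinates the integral becomes `∫₀^∞ r^(d-1) e^(btr - ar²) (1+r)^(-α) dr` with
`d = dim E`. Completing the square, `btr - ar² = ac² - a(r-c)²` for `c = bt/(2a)`. Peetre's
inequality `(1+r)^β ≤ (1+c)^β (1+|r-c|)^|β|` together with `|β|u ≤ β²/(2a) + au²/2` moves the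
weight to the centre `c` at the cost of half of the Gaussian, leaving `(1+c)^(d-1-α)` times a
Gaussian integral, and `(1+c)^(d-1-α) ≲ 1 + t^(d-α)`. -/

open Real Set Module

section

variable {a b c r : ℝ}

lemma one_add_rpow_le_mul_one_add_abs_sub_rpow (hr : 0 ≤ r) (hc : 0 ≤ c) (β : ℝ) :
    (1 + r) ^ β ≤ (1 + c) ^ β * (1 + |r - c|) ^ |β| := by
  have key : ∀ {x y s : ℝ}, 0 ≤ x → 0 ≤ y → 0 ≤ s →
      (1 + x) ^ s ≤ (1 + y) ^ s * (1 + |x - y|) ^ s := fun {x y s} hx hy hs => by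
    rw [← mul_rpow (by positivity) (by positivity)]
    exact rpow_le_rpow (by positivity) (by nlinarith [le_abs_self (x - y), abs_nonneg (x - y)]) hs
  rcases le_or_gt 0 β with hβ | hβ
  · rw [abs_of_nonneg hβ]
    exact key hr hc hβ
  · have h := key hc hr (neg_nonneg.2 hβ.le)
    rw [abs_sub_comm] at h
    have cancel : ∀ {x : ℝ}, 0 ≤ x → (1 + x) ^ β * (1 + x) ^ (-β) = 1 := fun hx => by
      rw [← rpow_add (by positivity), add_neg_cancel, rpow_zero]
    rw [abs_of_neg hβ]
    calc (1 + r) ^ β = (1 + r) ^ β * ((1 + c) ^ β * (1 + c) ^ (-β)) := by rw [cancel hc, mul_one]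
      _ ≤ (1 + r) ^ β * ((1 + c) ^ β * ((1 + r) ^ (-β) * (1 + |r - c|) ^ (-β))) := by gcongr
      _ = (1 + c) ^ β * (1 + |r - c|) ^ (-β) * ((1 + r) ^ β * (1 + r) ^ (-β)) := by ring
      _ = (1 + c) ^ β * (1 + |r - c|) ^ (-β) := by rw [cancel hr, mul_one]

lemma one_add_rpow_le_exp_mul {s u : ℝ} (hs : 0 ≤ s) (hu : 0 ≤ u) : (1 + u) ^ s ≤ exp (s * u) :=
  calc (1 + u) ^ s ≤ exp u ^ s := rpow_le_rpow (by positivity) (by linarith [add_one_le_exp u]) hs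
    _ = exp (s * u) := by rw [← exp_mul, mul_comm]

lemma one_add_rpow_le_exp_mul_exp_sq (ha : 0 < a) (hr : 0 ≤ r) (hc : 0 ≤ c) (β : ℝ) :
    (1 + r) ^ β ≤ exp (β ^ 2 / (2 * a)) * (1 + c) ^ β * exp (a / 2 * (r - c) ^ 2) := by
  have amgm : |β| * |r - c| ≤ β ^ 2 / (2 * a) + a / 2 * (r - c) ^ 2 := by
    rw [← sq_abs β, ← sq_abs (r - c), div_add' _ _ _ (by positivity), le_div_iff₀ (by positivity)]
    nlinarith [sq_nonneg (|β| - a * |r - c|)]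
  calc (1 + r) ^ β ≤ (1 + c) ^ β * (1 + |r - c|) ^ |β| :=
        one_add_rpow_le_mul_one_add_abs_sub_rpow hr hc β
    _ ≤ (1 + c) ^ β * exp (|β| * |r - c|) := by
        gcongr; exact one_add_rpow_le_exp_mul (abs_nonneg β) (abs_nonneg _)
    _ ≤ (1 + c) ^ β * exp (β ^ 2 / (2 * a) + a / 2 * (r - c) ^ 2) := by gcongr
    _ = _ := by rw [exp_add]; ring

lemma pow_mul_exp_mul_one_add_rpow_le (ha : 0 < a) (hr : 0 ≤ r) (hc : 0 ≤ c) (k : ℕ) (α : ℝ) :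
    r ^ k * (exp (2 * a * c * r - a * r ^ 2) * (1 + r) ^ (-α)) ≤
      exp (a * c ^ 2) * (exp (((k : ℝ) - α) ^ 2 / (2 * a)) * (1 + c) ^ ((k : ℝ) - α)) *
        exp (-(a / 2) * (r - c) ^ 2) := by
  have hpow : r ^ k ≤ (1 + r) ^ (k : ℝ) := by
    rw [rpow_natCast]; gcongr; linarith
  calc r ^ k * (exp (2 * a * c * r - a * r ^ 2) * (1 + r) ^ (-α))
      ≤ (1 + r) ^ (k : ℝ) * (exp (a * c ^ 2 - a * (r - c) ^ 2) * (1 + r) ^ (-α)) := by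
        rw [show 2 * a * c * r - a * r ^ 2 = a * c ^ 2 - a * (r - c) ^ 2 by ring]
        gcongr
    _ = (1 + r) ^ ((k : ℝ) - α) * exp (a * c ^ 2) * exp (-(a * (r - c) ^ 2)) := by
        rw [sub_eq_add_neg _ α, rpow_add (by positivity), sub_eq_add_neg, exp_add]; ring
    _ ≤ exp (((k : ℝ) - α) ^ 2 / (2 * a)) * (1 + c) ^ ((k : ℝ) - α) * exp (a / 2 * (r - c) ^ 2) *
          exp (a * c ^ 2) * exp (-(a * (r - c) ^ 2)) := by
        gcongr; exact one_add_rpow_le_exp_mul_exp_sq ha hr hc _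
    _ = _ := by
        rw [show -(a / 2) * (r - c) ^ 2 = a / 2 * (r - c) ^ 2 + -(a * (r - c) ^ 2) by ring, exp_add]
        ring

lemma setIntegral_Ioi_exp_neg_mul_sub_sq_le (hb : 0 < b) (c : ℝ) :
    ∫ r in Ioi (0 : ℝ), exp (-b * (r - c) ^ 2) ≤ √(π / b) :=
  calc ∫ r in Ioi (0 : ℝ), exp (-b * (r - c) ^ 2) ≤ ∫ r, exp (-b * (r - c) ^ 2) :=
        setIntegral_le_integral ((integrable_exp_neg_mul_sq hb).comp_sub_right c)
          (.of_forall fun _ => (exp_pos _).le)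
    _ = √(π / b) := by
        rw [integral_sub_right_eq_self (fun r => exp (-b * r ^ 2)) c, integral_gaussian]

lemma exists_one_add_mul_rpow_sub_one_le (hb : 0 ≤ b) (s : ℝ) :
    ∃ C > 0, ∀ t ≥ 0, (1 + b * t) ^ (s - 1) ≤ C * (1 + t ^ s) := by
  rcases le_or_gt 1 s with hs | hs
  · refine ⟨(1 + b) ^ s * 2 ^ (s - 1), by positivity, fun t ht => ?_⟩
    have two_pow : (1 + t) ^ s ≤ 2 ^ (s - 1) * (1 + t ^ s) := by
      lift t to NNReal using ht
      have h := NNReal.rpow_add_le_mul_rpow_add_rpow 1 t hs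
      rw [NNReal.one_rpow] at h
      exact_mod_cast h
    calc (1 + b * t) ^ (s - 1) ≤ (1 + b * t) ^ s :=
          rpow_le_rpow_of_exponent_le (by nlinarith) (by linarith)
      _ ≤ ((1 + b) * (1 + t)) ^ s := by gcongr; nlinarith
      _ ≤ (1 + b) ^ s * (2 ^ (s - 1) * (1 + t ^ s)) := by
          rw [mul_rpow (by positivity) (by positivity)]; gcongr
      _ = _ := by ring
  · refine ⟨1, one_pos, fun t ht => ?_⟩
    calc (1 + b * t) ^ (s - 1) ≤ 1 := rpow_le_one_of_one_le_of_nonpos (by nlinarith) (by linarith)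
      _ ≤ 1 * (1 + t ^ s) := by have := rpow_nonneg ht s; linarith

lemma exists_setIntegral_Ioi_pow_mul_exp_mul_one_add_rpow_le (ha : 0 < a) (hb : 0 ≤ b)
    (k : ℕ) (α : ℝ) :
    ∃ C > 0, ∀ t ≥ 0, ∫ r in Ioi (0 : ℝ), r ^ k * (exp (b * t * r - a * r ^ 2) * (1 + r) ^ (-α)) ≤
      C * exp (b ^ 2 * t ^ 2 / (4 * a)) * (1 + t ^ ((k + 1 : ℝ) - α)) := by
  set β : ℝ := k - α
  obtain ⟨C, hC, hpoly⟩ :=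
    exists_one_add_mul_rpow_sub_one_le (b := b / (2 * a)) (by positivity) ((k + 1 : ℝ) - α)
  refine ⟨exp (β ^ 2 / (2 * a)) * C * √(π / (a / 2)), by positivity, fun t ht => ?_⟩
  set c := b / (2 * a) * t with hc_def
  have hc : 0 ≤ c := by positivity
  have hbt : b * t = 2 * a * c := by rw [hc_def]; field_simp
  have hB : b ^ 2 * t ^ 2 / (4 * a) = a * c ^ 2 := by rw [hc_def]; field_simp; ring
  have hcβ : (1 + c) ^ β ≤ C * (1 + t ^ ((k + 1 : ℝ) - α)) := by
    convert hpoly t ht using 2; ring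
  have hG : Integrable (fun r => exp (-(a / 2) * (r - c) ^ 2)) :=
    (integrable_exp_neg_mul_sq (by positivity)).comp_sub_right c
  calc ∫ r in Ioi (0 : ℝ), r ^ k * (exp (b * t * r - a * r ^ 2) * (1 + r) ^ (-α))
      ≤ ∫ r in Ioi (0 : ℝ), exp (a * c ^ 2) * (exp (β ^ 2 / (2 * a)) * (1 + c) ^ β) *
          exp (-(a / 2) * (r - c) ^ 2) := by
        rw [hbt]
        refine integral_mono_of_nonneg ?_ (hG.restrict.const_mul _) ?_
        all_goals filter_upwards [ae_restrict_mem measurableSet_Ioi] with r (hr : 0 < r)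
        · positivity
        · exact pow_mul_exp_mul_one_add_rpow_le ha hr.le hc k α
    _ ≤ exp (a * c ^ 2) * (exp (β ^ 2 / (2 * a)) * (1 + c) ^ β) * √(π / (a / 2)) := by
        rw [integral_const_mul]
        gcongr
        exact setIntegral_Ioi_exp_neg_mul_sub_sq_le (by positivity) c
    _ ≤ exp (a * c ^ 2) * (exp (β ^ 2 / (2 * a)) * (C * (1 + t ^ ((k + 1 : ℝ) - α)))) *
          √(π / (a / 2)) := by gcongr
    _ = _ := by rw [hB]; ring

lemma exists_integral_exp_mul_norm_sub_sq_mul_one_add_norm_rpow_le {E : Type*}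
    [NormedAddCommGroup E] [NormedSpace ℝ E] [FiniteDimensional ℝ E] [MeasurableSpace E]
    [BorelSpace E] (μ : Measure E) [μ.IsAddHaarMeasure] (ha : 0 < a) (hb : 0 ≤ b) (α : ℝ) :
    ∃ C > 0, ∀ t ≥ 0, ∫ x, exp (b * t * ‖x‖ - a * ‖x‖ ^ 2) * (1 + ‖x‖) ^ (-α) ∂μ ≤
      C * exp (b ^ 2 * t ^ 2 / (4 * a)) * (1 + t ^ ((finrank ℝ E : ℝ) - α)) := by
  rcases subsingleton_or_nontrivial E with hE | hE
  · refine ⟨1 + μ.real univ, by positivity, fun t ht => ?_⟩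
    have hone (x : E) : exp (b * t * ‖x‖ - a * ‖x‖ ^ 2) * (1 + ‖x‖) ^ (-α) = 1 := by
      simp [Subsingleton.elim x 0]
    simp only [hone, integral_const, smul_eq_mul, mul_one]
    calc μ.real univ ≤ (1 + μ.real univ) * 1 * 1 := by linarith
      _ ≤ _ := by
          gcongr
          · exact one_le_exp (by positivity)
          · linarith [rpow_nonneg ht ((finrank ℝ E : ℝ) - α)]
  · obtain ⟨C, hC, hradial⟩ :=
      exists_setIntegral_Ioi_pow_mul_exp_mul_one_add_rpow_le ha hb (finrank ℝ E - 1) α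
    have hball : 0 < μ.real (Metric.ball 0 1) :=
      ENNReal.toReal_pos (Metric.measure_ball_pos μ 0 one_pos).ne' measure_ball_lt_top.ne
    have hdim : ((finrank ℝ E - 1 : ℕ) : ℝ) + 1 = finrank ℝ E := by
      rw [Nat.cast_pred finrank_pos, sub_add_cancel]
    refine ⟨finrank ℝ E * μ.real (Metric.ball 0 1) * C,
      mul_pos (mul_pos (Nat.cast_pos.2 finrank_pos) hball) hC, fun t ht => ?_⟩
    have hpolar := integral_fun_norm_addHaar μ fun r => exp (b * t * r - a * r ^ 2) * (1 + r) ^ (-α)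
    simp only [nsmul_eq_mul, smul_eq_mul] at hpolar
    have hrad := hradial t ht
    rw [hdim] at hrad
    rw [hpolar]
    calc (finrank ℝ E : ℝ) * (μ.real (Metric.ball 0 1) * _)
        ≤ finrank ℝ E * (μ.real (Metric.ball 0 1) *
            (C * exp (b ^ 2 * t ^ 2 / (4 * a)) * (1 + t ^ ((finrank ℝ E : ℝ) - α)))) := by
          gcongr
      _ = _ := by ring

end

theorem statement_10_general (n : ℕ) (p a ε α : ℝ) (hp : 0 < p) (ha : 0 < a) (hε : 0 < ε) :
    ∃ C : ℝ, 0 < C ∧ ∀ z : EuclideanSpace ℂ (Fin n),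
      (∫ w : EuclideanSpace ℂ (Fin n),
          Real.exp (p * ε * ‖z‖ * ‖w‖ - a * ‖w‖ ^ 2) * (1 + ‖w‖) ^ (-α))
        ≤ C * Real.exp (p ^ 2 * ε ^ 2 * ‖z‖ ^ 2 / (4 * a)) *
            (1 + ‖z‖ ^ (2 * (n : ℝ) - α)) := by
  obtain ⟨C, hC, hbound⟩ := exists_integral_exp_mul_norm_sub_sq_mul_one_add_norm_rpow_le
    (volume : Measure (EuclideanSpace ℂ (Fin n))) ha (mul_pos hp hε).le α
  have hdim : (finrank ℝ (EuclideanSpace ℂ (Fin n)) : ℝ) = 2 * n := by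
    rw [← finrank_mul_finrank ℝ ℂ, Complex.finrank_real_complex, finrank_euclideanSpace_fin]
    push_cast; ring
  refine ⟨C, hC, fun z => ?_⟩
  simpa only [hdim, mul_pow] using hbound ‖z‖ (norm_nonneg z)

theorem statement_10 (n : ℕ) (p a ε α : ℝ) (hp : 0 < p) (ha : 0 < a) (hε : 0 < ε)
    (hα : α ≠ 2 * n) :
    ∃ C : ℝ, 0 < C ∧ ∀ z : EuclideanSpace ℂ (Fin n),
      (∫ w : EuclideanSpace ℂ (Fin n),
          Real.exp (p * ε * ‖z‖ * ‖w‖ - a * ‖w‖ ^ 2) * (1 + ‖w‖) ^ (-α))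
        ≤ C * Real.exp (p ^ 2 * ε ^ 2 * ‖z‖ ^ 2 / (4 * a)) *
            (1 + ‖z‖ ^ (2 * (n : ℝ) - α)) :=
  statement_10_general n p a ε α hp ha hε
end

section
/- Given α real and a, b > 0, there is a constant C > 0 such that ∫_0^1 t^{a−1} (1−t)^{b−1} e^{t²|z|²/2} (1+t|z|)^α dt ≤ C e^{|z|²/2} (1+|z|)^{α−2b} for all z ∈ ℂⁿ. -/
/-! Split the integrand at `t = 1 / 2`. For `t ≤ 1 / 2` the Gaussian factor is at most
`exp (R² / 8)`, and the gap `exp (3 R² / 8)` to `exp (R² / 2)` absorbs any power of `1 + R`.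
For `t ≥ 1 / 2`, `t² ≤ 1 - (1 - t)` bounds `exp (t² R² / 2)` by `exp (R² / 2) exp (-c (1 - t))`
with `c = R² / 2`, and `∫₀¹ s^(b-1) e^(-c s) ds` is at most both `1 / b` and `Γ(b) c^(-b)`,
hence `O((1 + c)^(-b)) = O((1 + R)^(-2b))`. -/

open MeasureTheory Set Real

lemma integrableOn_rpow_sub_one_Ioo {a : ℝ} (ha : 0 < a) :
    IntegrableOn (fun t : ℝ => t ^ (a - 1)) (Ioo 0 1) :=
  (intervalIntegral.intervalIntegrable_rpow' (by linarith : (-1:ℝ) < a - 1)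
    (a := 0) (b := 1)).1.mono_set Ioo_subset_Ioc_self

lemma integrableOn_one_sub_rpow_sub_one_Ioo {b : ℝ} (hb : 0 < b) :
    IntegrableOn (fun t : ℝ => (1 - t) ^ (b - 1)) (Ioo 0 1) := by
  have h := ((intervalIntegral.intervalIntegrable_rpow' (by linarith : (-1:ℝ) < b - 1)
    (a := 0) (b := 1)).comp_sub_left 1).symm
  simp only [sub_zero, sub_self] at h
  exact h.1.mono_set Ioo_subset_Ioc_self

lemma setIntegral_Ioo_rpow_sub_one {a : ℝ} (ha : 0 < a) :
    ∫ t in Ioo (0:ℝ) 1, t ^ (a - 1) = 1 / a := by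
  rw [← integral_Ioc_eq_integral_Ioo, ← intervalIntegral.integral_of_le zero_le_one,
    integral_rpow (Or.inl (by linarith)), zero_rpow (by linarith), one_rpow]
  ring_nf

lemma setIntegral_Ioo_comp_one_sub (F : ℝ → ℝ) :
    ∫ t in Ioo (0:ℝ) 1, F (1 - t) = ∫ s in Ioo (0:ℝ) 1, F s := by
  simp only [← integral_Ioc_eq_integral_Ioo, ← intervalIntegral.integral_of_le zero_le_one,
    intervalIntegral.integral_comp_sub_left F 1, sub_self, sub_zero]

lemma rpow_sub_one_le_max_of_half_le {x r : ℝ} (h1 : 1 / 2 ≤ x) (h2 : x ≤ 1) :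
    x ^ (r - 1) ≤ max 1 ((2:ℝ) ^ (1 - r)) := by
  rcases le_or_gt 1 r with h | h
  · exact (rpow_le_one (by linarith) h2 (by linarith)).trans (le_max_left _ _)
  · calc x ^ (r - 1) ≤ (1 / 2) ^ (r - 1) := rpow_le_rpow_of_nonpos (by norm_num) h1 (by linarith)
      _ = (2:ℝ) ^ (1 - r) := by rw [one_div, inv_rpow zero_le_two, ← rpow_neg zero_le_two, neg_sub]
      _ ≤ _ := le_max_right _ _

lemma one_add_mul_rpow_le_rpow_max {t R α : ℝ} (ht0 : 0 ≤ t) (ht1 : t ≤ 1) (hR : 0 ≤ R) :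
    (1 + t * R) ^ α ≤ (1 + R) ^ max α 0 := by
  have htR : t * R ≤ R := mul_le_of_le_one_left hR ht1
  rcases le_or_gt 0 α with hα | hα
  · rw [max_eq_left hα]
    exact rpow_le_rpow (by positivity) (by linarith) hα
  · exact (rpow_le_one_of_one_le_of_nonpos (by linarith [mul_nonneg ht0 hR]) hα.le).trans
      (one_le_rpow (by linarith) (le_max_right α 0))

lemma one_add_mul_rpow_le_of_half_le {t R α : ℝ} (ht0 : 1 / 2 ≤ t) (ht1 : t ≤ 1) (hR : 0 ≤ R) :
    (1 + t * R) ^ α ≤ max 1 ((2:ℝ) ^ (-α)) * (1 + R) ^ α := by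
  have hpos : 0 ≤ (1 + R) ^ α := rpow_nonneg (by linarith) _
  rcases le_or_gt 0 α with hα | hα
  · calc (1 + t * R) ^ α ≤ (1 + R) ^ α :=
          rpow_le_rpow (by positivity) (by linarith [mul_le_of_le_one_left hR ht1]) hα
      _ ≤ _ := le_mul_of_one_le_left hpos (le_max_left _ _)
  · calc (1 + t * R) ^ α ≤ ((1 + R) / 2) ^ α :=
          rpow_le_rpow_of_nonpos (by linarith) (by nlinarith) hα.le
      _ = (2:ℝ) ^ (-α) * (1 + R) ^ α := by
          rw [div_rpow (by linarith) zero_le_two, rpow_neg zero_le_two]; ring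
      _ ≤ _ := mul_le_mul_of_nonneg_right (le_max_right _ _) hpos

lemma one_add_rpow_le_exp_mul_exp {q ε R : ℝ} (hq : 0 ≤ q) (hε : 0 < ε) (hR : 0 ≤ R) :
    (1 + R) ^ q ≤ exp (q ^ 2 / (4 * ε)) * exp (ε * R ^ 2) := by
  have hlog : log (1 + R) ≤ R := by linarith [log_le_sub_one_of_pos (by linarith : 0 < 1 + R)]
  have hamgm : q * R ≤ q ^ 2 / (4 * ε) + ε * R ^ 2 := by
    rw [div_add' _ _ _ (by positivity), le_div_iff₀ (by positivity)]
    nlinarith [sq_nonneg (q - 2 * ε * R)]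
  rw [rpow_def_of_pos (by linarith), ← exp_add, exp_le_exp]
  nlinarith

lemma setIntegral_Ioo_rpow_mul_exp_neg_mul_le_inv {b c : ℝ} (hb : 0 < b) (hc : 0 ≤ c) :
    ∫ s in Ioo (0:ℝ) 1, s ^ (b - 1) * exp (-(c * s)) ≤ 1 / b := by
  rw [← setIntegral_Ioo_rpow_sub_one hb]
  refine setIntegral_mono_on ?_ (integrableOn_rpow_sub_one_Ioo hb) measurableSet_Ioo
    fun s hs => mul_le_of_le_one_right (rpow_nonneg hs.1.le _)
      (exp_le_one_iff.2 (by nlinarith [hs.1]))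
  refine (integrableOn_rpow_sub_one_Ioo hb).mono' (by fun_prop) ?_
  refine (ae_restrict_iff' measurableSet_Ioo).2 (ae_of_all _ fun s hs => ?_)
  rw [norm_mul, norm_of_nonneg (rpow_nonneg hs.1.le _), norm_of_nonneg (exp_nonneg _)]
  exact mul_le_of_le_one_right (rpow_nonneg hs.1.le _) (exp_le_one_iff.2 (by nlinarith [hs.1]))

lemma setIntegral_Ioo_rpow_mul_exp_neg_mul_le_Gamma {b c : ℝ} (hb : 0 < b) (hc : 0 < c) :
    ∫ s in Ioo (0:ℝ) 1, s ^ (b - 1) * exp (-(c * s)) ≤ Gamma b * c ^ (-b) := by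
  have hGamma := integral_rpow_mul_exp_neg_mul_Ioi hb hc
  rw [one_div, inv_rpow hc.le, ← rpow_neg hc.le, mul_comm] at hGamma
  rw [← hGamma]
  refine setIntegral_mono_set (.of_integral_ne_zero (by rw [hGamma]; positivity))
    ((ae_restrict_iff' measurableSet_Ioi).2 (ae_of_all _ fun s (hs : 0 < s) => ?_))
    Ioo_subset_Ioi_self.eventuallyLE
  exact mul_nonneg (rpow_nonneg hs.le _) (exp_nonneg _)

lemma exists_setIntegral_Ioo_rpow_mul_exp_neg_mul_le {b : ℝ} (hb : 0 < b) :
    ∃ C, 0 < C ∧ ∀ c, 0 ≤ c →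
      ∫ s in Ioo (0:ℝ) 1, s ^ (b - 1) * exp (-(c * s)) ≤ C * (1 + c) ^ (-b) := by
  have hGamma := Gamma_pos_of_pos hb
  set m := max (1 / b) (Gamma b)
  have htwo : (2:ℝ) ^ b * 2 ^ (-b) = 1 := by rw [← rpow_add two_pos]; simp
  refine ⟨2 ^ b * m, by positivity, fun c hc => ?_⟩
  rcases le_or_gt c 1 with hc1 | hc1
  · calc _ ≤ 1 / b := setIntegral_Ioo_rpow_mul_exp_neg_mul_le_inv hb hc
      _ ≤ m := le_max_left _ _
      _ = 2 ^ b * m * 2 ^ (-b) := by rw [mul_right_comm, htwo, one_mul]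
      _ ≤ 2 ^ b * m * (1 + c) ^ (-b) :=
          mul_le_mul_of_nonneg_left (rpow_le_rpow_of_nonpos (by linarith) (by linarith)
            (by linarith)) (by positivity)
  · calc _ ≤ Gamma b * c ^ (-b) := setIntegral_Ioo_rpow_mul_exp_neg_mul_le_Gamma hb (by linarith)
      _ ≤ m * c ^ (-b) := mul_le_mul_of_nonneg_right (le_max_right _ _) (by positivity)
      _ = 2 ^ b * m * (2 * c) ^ (-b) := by
          rw [mul_rpow zero_le_two (by linarith), mul_mul_mul_comm, htwo, one_mul]
      _ ≤ 2 ^ b * m * (1 + c) ^ (-b) :=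
          mul_le_mul_of_nonneg_left (rpow_le_rpow_of_nonpos (by linarith) (by linarith)
            (by linarith)) (by positivity)

lemma one_add_sq_div_two_rpow_neg_le {R b : ℝ} (hR : 0 ≤ R) (hb : 0 ≤ b) :
    (1 + R ^ 2 / 2) ^ (-b) ≤ 4 ^ b * (1 + R) ^ (-(2 * b)) := by
  rw [show -(2 * b) = ((2 : ℕ) : ℝ) * -b by push_cast; ring, rpow_natCast_mul (by linarith),
    mul_comm, ← inv_inv ((4:ℝ) ^ b), ← rpow_neg (by norm_num), ← div_eq_mul_inv,
    ← div_rpow (by positivity) (by norm_num)]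
  exact rpow_le_rpow_of_nonpos (by positivity) (by nlinarith) (by linarith)

section BetaExpRpow

variable {α a b R t : ℝ}

lemma beta_exp_rpow_le_of_le_half (hR : 0 ≤ R) (ht0 : 0 < t) (ht : t ≤ 1 / 2) :
    t ^ (a - 1) * (1 - t) ^ (b - 1) * exp (t ^ 2 * R ^ 2 / 2) * (1 + t * R) ^ α ≤
      max 1 ((2:ℝ) ^ (1 - b)) * exp (R ^ 2 / 8) * (1 + R) ^ max α 0 * t ^ (a - 1) := by
  have hbeta : (1 - t) ^ (b - 1) ≤ max 1 ((2:ℝ) ^ (1 - b)) :=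
    rpow_sub_one_le_max_of_half_le (by linarith) (by linarith)
  have hexp : exp (t ^ 2 * R ^ 2 / 2) ≤ exp (R ^ 2 / 8) :=
    exp_le_exp.2 (by nlinarith [mul_nonneg (by nlinarith : (0:ℝ) ≤ 1 / 4 - t ^ 2) (sq_nonneg R)])
  have hpow := one_add_mul_rpow_le_rpow_max (α := α) ht0.le (by linarith) hR
  have := rpow_nonneg ht0.le (a - 1)
  have := rpow_nonneg (by linarith : 0 ≤ 1 - t) (b - 1)
  calc _ = t ^ (a - 1) * ((1 - t) ^ (b - 1) * exp (t ^ 2 * R ^ 2 / 2) * (1 + t * R) ^ α) := by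
        ring
    _ ≤ t ^ (a - 1) * (max 1 ((2:ℝ) ^ (1 - b)) * exp (R ^ 2 / 8) * (1 + R) ^ max α 0) := by
        gcongr
    _ = _ := by ring

lemma beta_exp_rpow_le_of_half_le (hR : 0 ≤ R) (ht : 1 / 2 ≤ t) (ht1 : t < 1) :
    t ^ (a - 1) * (1 - t) ^ (b - 1) * exp (t ^ 2 * R ^ 2 / 2) * (1 + t * R) ^ α ≤
      max 1 ((2:ℝ) ^ (1 - a)) * max 1 ((2:ℝ) ^ (-α)) * exp (R ^ 2 / 2) * (1 + R) ^ α *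
        ((1 - t) ^ (b - 1) * exp (-(R ^ 2 / 2 * (1 - t)))) := by
  have hbeta : t ^ (a - 1) ≤ max 1 ((2:ℝ) ^ (1 - a)) := rpow_sub_one_le_max_of_half_le ht ht1.le
  have hexp : exp (t ^ 2 * R ^ 2 / 2) ≤ exp (R ^ 2 / 2) * exp (-(R ^ 2 / 2 * (1 - t))) := by
    rw [← exp_add, exp_le_exp]
    nlinarith [mul_nonneg (sq_nonneg R) (mul_nonneg (by linarith : 0 ≤ t) (by linarith : 0 ≤ 1 - t))]
  have hpow := one_add_mul_rpow_le_of_half_le (α := α) ht ht1.le hR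
  have := rpow_nonneg (by linarith : 0 ≤ t) (a - 1)
  have := rpow_nonneg (by linarith : 0 ≤ 1 - t) (b - 1)
  have := rpow_nonneg (by nlinarith : 0 ≤ 1 + t * R) α
  calc _ ≤ max 1 ((2:ℝ) ^ (1 - a)) * (1 - t) ^ (b - 1) *
          (exp (R ^ 2 / 2) * exp (-(R ^ 2 / 2 * (1 - t)))) *
          (max 1 ((2:ℝ) ^ (-α)) * (1 + R) ^ α) := by gcongr
    _ = _ := by ring

end BetaExpRpow

lemma setIntegral_beta_exp_rpow_le {α a b R : ℝ} (ha : 0 < a) (hb : 0 < b) (hR : 0 ≤ R) :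
    ∫ t in Ioo (0:ℝ) 1, t ^ (a - 1) * (1 - t) ^ (b - 1) * exp (t ^ 2 * R ^ 2 / 2) *
        (1 + t * R) ^ α ≤
      max 1 ((2:ℝ) ^ (1 - b)) * exp (R ^ 2 / 8) * (1 + R) ^ max α 0 * (1 / a) +
        max 1 ((2:ℝ) ^ (1 - a)) * max 1 ((2:ℝ) ^ (-α)) * exp (R ^ 2 / 2) * (1 + R) ^ α *
          ∫ s in Ioo (0:ℝ) 1, s ^ (b - 1) * exp (-(R ^ 2 / 2 * s)) := by
  set A := max 1 ((2:ℝ) ^ (1 - b)) * exp (R ^ 2 / 8) * (1 + R) ^ max α 0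
  set B := max 1 ((2:ℝ) ^ (1 - a)) * max 1 ((2:ℝ) ^ (-α)) * exp (R ^ 2 / 2) * (1 + R) ^ α
  have hA : 0 ≤ A := by positivity
  have hB : 0 ≤ B := by positivity
  set v : ℝ → ℝ := fun t => (1 - t) ^ (b - 1) * exp (-(R ^ 2 / 2 * (1 - t)))
  have hv_le : ∀ t ∈ Ioo (0:ℝ) 1, v t ≤ (1 - t) ^ (b - 1) := fun t ht =>
    mul_le_of_le_one_right (rpow_nonneg (by linarith [ht.2]) _)
      (exp_le_one_iff.2 (by nlinarith [ht.2]))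
  have hv_nonneg : ∀ t ∈ Ioo (0:ℝ) 1, 0 ≤ v t := fun t ht =>
    mul_nonneg (rpow_nonneg (by linarith [ht.2]) _) (exp_nonneg _)
  have hv : IntegrableOn v (Ioo 0 1) := by
    refine (integrableOn_one_sub_rpow_sub_one_Ioo hb).mono' (by fun_prop) ?_
    refine (ae_restrict_iff' measurableSet_Ioo).2 (ae_of_all _ fun t ht => ?_)
    rw [norm_of_nonneg (hv_nonneg t ht)]
    exact hv_le t ht
  have hg : IntegrableOn (fun t => A * t ^ (a - 1) + B * v t) (Ioo 0 1) :=
    ((integrableOn_rpow_sub_one_Ioo ha).const_mul A).add (hv.const_mul B)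
  calc _ ≤ ∫ t in Ioo (0:ℝ) 1, A * t ^ (a - 1) + B * v t := by
        refine integral_mono_of_nonneg ?_ hg ?_ <;>
          refine (ae_restrict_iff' measurableSet_Ioo).2 (ae_of_all _ fun t ⟨ht0, ht1⟩ => ?_)
        · have := rpow_nonneg (by nlinarith : 0 ≤ 1 + t * R) α
          have := rpow_nonneg (by linarith : 0 ≤ 1 - t) (b - 1)
          positivity
        · rcases le_or_gt t (1 / 2) with ht | ht
          · exact (beta_exp_rpow_le_of_le_half hR ht0 ht).trans
              (le_add_of_nonneg_right (mul_nonneg hB (hv_nonneg t ⟨ht0, ht1⟩)))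
          · exact (beta_exp_rpow_le_of_half_le hR ht.le ht1).trans
              (le_add_of_nonneg_left (mul_nonneg hA (rpow_nonneg ht0.le _)))
    _ = A * (1 / a) + B * ∫ s in Ioo (0:ℝ) 1, s ^ (b - 1) * exp (-(R ^ 2 / 2 * s)) := by
        rw [integral_add ((integrableOn_rpow_sub_one_Ioo ha).const_mul A) (hv.const_mul B),
          integral_const_mul, integral_const_mul, setIntegral_Ioo_rpow_sub_one ha,
          ← setIntegral_Ioo_comp_one_sub (fun s => s ^ (b - 1) * exp (-(R ^ 2 / 2 * s)))]

theorem exists_setIntegral_beta_exp_rpow_le {α a b : ℝ} (ha : 0 < a) (hb : 0 < b) :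
    ∃ C, 0 < C ∧ ∀ R, 0 ≤ R →
      ∫ t in Ioo (0:ℝ) 1, t ^ (a - 1) * (1 - t) ^ (b - 1) * exp (t ^ 2 * R ^ 2 / 2) *
          (1 + t * R) ^ α ≤ C * exp (R ^ 2 / 2) * (1 + R) ^ (α - 2 * b) := by
  obtain ⟨CJ, hCJ, hJ⟩ := exists_setIntegral_Ioo_rpow_mul_exp_neg_mul_le hb
  set q := max α 0 - α + 2 * b
  have hq : 0 ≤ q := by linarith [le_max_left α 0]
  set C₁ := max 1 ((2:ℝ) ^ (1 - b)) * exp (q ^ 2 / (4 * (3 / 8))) / a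
  set C₂ := max 1 ((2:ℝ) ^ (1 - a)) * max 1 ((2:ℝ) ^ (-α)) * (CJ * 4 ^ b)
  refine ⟨C₁ + C₂, by positivity, fun R hR => ?_⟩
  have h1R : 0 < 1 + R := by linarith
  have hfirst : max 1 ((2:ℝ) ^ (1 - b)) * exp (R ^ 2 / 8) * (1 + R) ^ max α 0 * (1 / a) ≤
      C₁ * (exp (R ^ 2 / 2) * (1 + R) ^ (α - 2 * b)) := by
    have hsplit : (1 + R) ^ max α 0 = (1 + R) ^ q * (1 + R) ^ (α - 2 * b) := by
      rw [← rpow_add h1R]; congr 1; ring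
    have hexp : exp (R ^ 2 / 8) * exp (3 / 8 * R ^ 2) = exp (R ^ 2 / 2) := by
      rw [← exp_add]; ring_nf
    calc _ = max 1 ((2:ℝ) ^ (1 - b)) / a * exp (R ^ 2 / 8) * (1 + R) ^ q *
          (1 + R) ^ (α - 2 * b) := by rw [hsplit]; ring
      _ ≤ max 1 ((2:ℝ) ^ (1 - b)) / a * exp (R ^ 2 / 8) *
          (exp (q ^ 2 / (4 * (3 / 8))) * exp (3 / 8 * R ^ 2)) * (1 + R) ^ (α - 2 * b) := by
        gcongr; exact one_add_rpow_le_exp_mul_exp hq (by norm_num) hR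
      _ = _ := by rw [← hexp]; ring
  have hsecond : max 1 ((2:ℝ) ^ (1 - a)) * max 1 ((2:ℝ) ^ (-α)) * exp (R ^ 2 / 2) *
        (1 + R) ^ α * ∫ s in Ioo (0:ℝ) 1, s ^ (b - 1) * exp (-(R ^ 2 / 2 * s)) ≤
      C₂ * (exp (R ^ 2 / 2) * (1 + R) ^ (α - 2 * b)) := by
    have hJR := (hJ (R ^ 2 / 2) (by positivity)).trans
      (mul_le_mul_of_nonneg_left (one_add_sq_div_two_rpow_neg_le hR hb.le) hCJ.le)
    calc _ ≤ max 1 ((2:ℝ) ^ (1 - a)) * max 1 ((2:ℝ) ^ (-α)) * exp (R ^ 2 / 2) *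
          (1 + R) ^ α * (CJ * (4 ^ b * (1 + R) ^ (-(2 * b)))) := by gcongr
      _ = C₂ * (exp (R ^ 2 / 2) * ((1 + R) ^ α * (1 + R) ^ (-(2 * b)))) := by ring
      _ = _ := by rw [← rpow_add h1R, ← sub_eq_add_neg]
  calc _ ≤ _ := setIntegral_beta_exp_rpow_le ha hb hR
    _ ≤ C₁ * (exp (R ^ 2 / 2) * (1 + R) ^ (α - 2 * b)) +
        C₂ * (exp (R ^ 2 / 2) * (1 + R) ^ (α - 2 * b)) := add_le_add hfirst hsecond
    _ = _ := by ring

theorem statement_12 (n : ℕ) (α a b : ℝ) (ha : 0 < a) (hb : 0 < b) :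
    ∃ C : ℝ, 0 < C ∧ ∀ z : EuclideanSpace ℂ (Fin n),
      (∫ t in Set.Ioo (0:ℝ) 1,
          t ^ (a - 1) * (1 - t) ^ (b - 1) * Real.exp (t ^ 2 * ‖z‖ ^ 2 / 2) *
            (1 + t * ‖z‖) ^ α)
        ≤ C * Real.exp (‖z‖ ^ 2 / 2) * (1 + ‖z‖) ^ (α - 2 * b) := by
  obtain ⟨C, hC, hbound⟩ := exists_setIntegral_beta_exp_rpow_le (α := α) ha hb
  exact ⟨C, hC, fun z => hbound ‖z‖ (norm_nonneg z)⟩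
end

section
/- Given α real, there is a constant C > 0 such that for every multi-index ν and every entire f with ‖f‖_{F^∞_α} := sup_z |f(z)| e^{−|z|²/2} (1+|z|)^{−α} < ∞, one has |∂^ν f(0)/ν!| · ‖z^ν‖_{F^∞_α} ≤ C ‖f‖_{F^∞_α}. -/
/-!
Cauchy's estimate on the polydisc torus `{w : |w j| = |z j|}` bounds `|∂^ν f(0)/ν!| |z^ν|` by the
supremum of `|f|` on that torus. Every point of the torus has norm `|z|`, and the weight
`e^{-|z|²/2} (1+|z|)^{-α}` depends only on `|z|`, so the estimate holds with `C = 1`.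
The iterated one-variable Cauchy estimate needs the partial derivatives of an entire function
on `ℂⁿ` to be entire again; this follows by differentiating Cauchy's integral formula for the
first derivative under the integral sign.
-/

open MeasureTheory

/-- The partial derivative `∂_i` of a function on `ℂⁿ`. -/
noncomputable def cpderiv {n : ℕ} (i : Fin n)
    (f : EuclideanSpace ℂ (Fin n) → ℂ) : EuclideanSpace ℂ (Fin n) → ℂ :=
  fun z => fderiv ℂ f z (EuclideanSpace.single i 1)

/-- The iterated partial derivative `∂^ν` associated to a multi-index `ν`. -/
noncomputable def mderiv {n : ℕ} (ν : Fin n → ℕ)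
    (f : EuclideanSpace ℂ (Fin n) → ℂ) : EuclideanSpace ℂ (Fin n) → ℂ :=
  (List.finRange n).foldr (fun i g => (fun h => cpderiv i h)^[ν i] g) f

open Metric Real Complex
open scoped Nat

-- Stated multiplicatively so that it also covers the degenerate circle `r = 0`.
theorem norm_iteratedDeriv_mul_pow_le {F : Type*} [NormedAddCommGroup F] [NormedSpace ℂ F]
    [CompleteSpace F] {f : ℂ → F} (hf : Differentiable ℂ f) {c : ℂ} {r B : ℝ} (hr : 0 ≤ r)
    (hB : ∀ u ∈ sphere c r, ‖f u‖ ≤ B) (k : ℕ) :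
    ‖iteratedDeriv k f c‖ * r ^ k ≤ k ! * B := by
  rcases hr.eq_or_lt with rfl | hr
  · have hc : ‖f c‖ ≤ B := hB c (by simp)
    rcases k with _ | k
    · simpa using hc
    · simpa using mul_nonneg (Nat.cast_nonneg _) ((norm_nonneg _).trans hc)
  · rw [← le_div_iff₀ (by positivity)]
    exact norm_iteratedDeriv_le_of_forall_mem_sphere_norm_le k hr hf.diffContOnCl hB

section DirectionalDerivative

variable {E F : Type*} [NormedAddCommGroup E] [NormedSpace ℂ E] [NormedAddCommGroup F]
  [NormedSpace ℂ F] {g : E → F}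

theorem hasDerivAt_comp_add_smul {z v : E} {u : ℂ} (hg : DifferentiableAt ℂ g (z + u • v)) :
    HasDerivAt (fun u : ℂ => g (z + u • v)) (fderiv ℂ g (z + u • v) v) u := by
  have hline : HasDerivAt (fun u : ℂ => z + u • v) v u := by
    simpa using ((hasDerivAt_id u).smul_const v).const_add z
  exact hg.hasFDerivAt.comp_hasDerivAt u hline

theorem fderiv_apply_eq_circleIntegral [CompleteSpace F] (hg : Differentiable ℂ g) (z v : E) :
    fderiv ℂ g z v = (2 * π * I)⁻¹ • ∮ u in C(0, 1), (1 / u ^ 2) • g (z + u • v) := by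
  have hslice : Differentiable ℂ fun u : ℂ => g (z + u • v) :=
    fun u => (hasDerivAt_comp_add_smul (hg _)).differentiableAt
  have hcauchy := hslice.differentiableOn.deriv_eq_smul_circleIntegral (c := 0) one_pos
  simp only [sub_zero] at hcauchy
  rw [hcauchy, (hasDerivAt_comp_add_smul (hg _)).deriv, inv_smul_smul₀ two_pi_I_ne_zero,
    zero_smul, add_zero]

theorem exists_bound_norm_fderiv [FiniteDimensional ℂ E] (hg : Differentiable ℂ g) (z : E)
    (r : ℝ) : ∃ K, ∀ y ∈ closedBall z r, ‖fderiv ℂ g y‖ ≤ K := by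
  obtain ⟨K, hK⟩ := (isCompact_closedBall z (r + 1)).exists_bound_of_continuousOn
    hg.continuous.continuousOn
  refine ⟨2 * K, fun y hy => ?_⟩
  have hmaps : Set.MapsTo g (ball y 1) (closedBall (g y) (2 * K)) := fun w hw => by
    have hw' : w ∈ closedBall z (r + 1) := by
      rw [mem_ball] at hw; rw [mem_closedBall] at hy ⊢
      linarith [dist_triangle w y z]
    rw [mem_closedBall, dist_eq_norm]
    have hy' : y ∈ closedBall z (r + 1) := closedBall_subset_closedBall (by linarith) hy
    linarith [norm_sub_le (g w) (g y), hK w hw', hK y hy']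
  simpa using norm_fderiv_le_div_of_mapsTo_ball hg.differentiableOn hmaps one_pos

theorem differentiable_circleIntegral_smul_comp_add_smul [FiniteDimensional ℂ E]
    [CompleteSpace F] [SecondCountableTopology F] (hg : Differentiable ℂ g) (v : E) {h : ℂ → ℂ}
    (hh : ContinuousOn h (sphere 0 1)) :
    Differentiable ℂ fun z => ∮ u in C(0, 1), h u • g (z + u • v) := by
  intro z₀
  borelize E
  set κ : ℝ → ℂ := fun θ => circleMap 0 1 θ * I * h (circleMap 0 1 θ)
  have hκ : Continuous κ := (by fun_prop : Continuous fun θ => circleMap 0 1 θ * I).mul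
    (hh.comp_continuous (continuous_circleMap 0 1) fun θ => circleMap_mem_sphere 0 zero_le_one θ)
  obtain ⟨Cκ, hCκ⟩ := (isCompact_uIcc (a := 0) (b := 2 * π)).exists_bound_of_continuousOn
    hκ.continuousOn
  obtain ⟨K, hK⟩ := exists_bound_norm_fderiv hg z₀ (1 + ‖v‖)
  have hpath : Continuous fun θ => circleMap 0 1 θ • v :=
    (continuous_circleMap 0 1).smul continuous_const
  have hint : (fun z => ∮ u in C(0, 1), h u • g (z + u • v)) =
      fun z => ∫ θ in 0..2 * π, κ θ • g (z + circleMap 0 1 θ • v) := by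
    funext z
    simp only [circleIntegral, κ, deriv_circleMap, mul_smul]
  rw [hint]
  refine (intervalIntegral.hasFDerivAt_integral_of_dominated_of_fderiv_le
    (F' := fun z θ => κ θ • fderiv ℂ g (z + circleMap 0 1 θ • v)) (bound := fun _ => Cκ * K)
    (ball_mem_nhds z₀ one_pos) ?_ ?_ ?_ ?_ ?_ ?_).differentiableAt
  · exact .of_forall fun z =>
      (hκ.smul (hg.continuous.comp (continuous_const.add hpath))).aestronglyMeasurable
  · exact (hκ.smul (hg.continuous.comp (continuous_const.add hpath))).intervalIntegrable _ _
  · exact hκ.aestronglyMeasurable.smul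
      ((measurable_fderiv ℂ g).comp (measurable_const.add hpath.measurable)).aestronglyMeasurable
  · refine ae_of_all _ fun θ hθ x hx => ?_
    have hy : x + circleMap 0 1 θ • v ∈ closedBall z₀ (1 + ‖v‖) := by
      rw [mem_ball, dist_eq_norm] at hx
      rw [mem_closedBall, dist_eq_norm, add_sub_right_comm]
      calc ‖x - z₀ + circleMap 0 1 θ • v‖ ≤ ‖x - z₀‖ + ‖circleMap 0 1 θ • v‖ :=
            norm_add_le _ _
        _ ≤ 1 + ‖v‖ := by simp [norm_smul, norm_circleMap_zero, hx.le]
    rw [norm_smul]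
    exact mul_le_mul (hCκ θ (Set.uIoc_subset_uIcc hθ)) (hK _ hy) (norm_nonneg _)
      ((norm_nonneg _).trans (hCκ θ (Set.uIoc_subset_uIcc hθ)))
  · exact intervalIntegrable_const
  · exact ae_of_all _ fun θ _ x _ =>
      ((hg _).hasFDerivAt.comp x ((hasFDerivAt_id x).add_const _)).const_smul (κ θ)

theorem differentiable_fderiv_apply [FiniteDimensional ℂ E] [CompleteSpace F]
    [SecondCountableTopology F] (hg : Differentiable ℂ g) (v : E) :
    Differentiable ℂ fun z => fderiv ℂ g z v := by
  simp_rw [fderiv_apply_eq_circleIntegral hg]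
  refine (differentiable_circleIntegral_smul_comp_add_smul hg v ?_).const_smul _
  exact continuousOn_const.div (by fun_prop) fun u hu =>
    pow_ne_zero 2 (ne_zero_of_mem_sphere one_ne_zero ⟨u, hu⟩)

end DirectionalDerivative

section PartialDerivatives

variable {n : ℕ}

local notation "ℂⁿ" => EuclideanSpace ℂ (Fin n)

theorem differentiable_cpderiv (i : Fin n) {g : ℂⁿ → ℂ} (hg : Differentiable ℂ g) :
    Differentiable ℂ (cpderiv i g) :=
  differentiable_fderiv_apply hg _

theorem differentiable_iterate_cpderiv (i : Fin n) (k : ℕ) {g : ℂⁿ → ℂ}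
    (hg : Differentiable ℂ g) : Differentiable ℂ ((fun h => cpderiv i h)^[k] g) :=
  Function.Iterate.rec (Differentiable ℂ ·) hg (fun _ => differentiable_cpderiv i) k

theorem differentiable_foldr_iterate_cpderiv (ν : Fin n → ℕ) (L : List (Fin n))
    {f : ℂⁿ → ℂ} (hf : Differentiable ℂ f) :
    Differentiable ℂ (L.foldr (fun i g => (fun h => cpderiv i h)^[ν i] g) f) := by
  induction L with
  | nil => exact hf
  | cons i L ih => exact differentiable_iterate_cpderiv i (ν i) ih

theorem iterate_cpderiv_apply_add_smul_single (i : Fin n) (k : ℕ) {g : ℂⁿ → ℂ}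
    (hg : Differentiable ℂ g) (z : ℂⁿ) (w : ℂ) :
    (fun h => cpderiv i h)^[k] g (z + w • EuclideanSpace.single i 1) =
      iteratedDeriv k (fun u : ℂ => g (z + u • EuclideanSpace.single i 1)) w := by
  induction k generalizing w with
  | zero => simp
  | succ k ih =>
    have hk : iteratedDeriv k (fun u : ℂ => g (z + u • EuclideanSpace.single i 1)) =
        fun u => (fun h => cpderiv i h)^[k] g (z + u • EuclideanSpace.single i 1) :=
      funext fun u => (ih u).symm
    rw [Function.iterate_succ_apply', iteratedDeriv_succ, hk]
    exact (hasDerivAt_comp_add_smul (differentiable_iterate_cpderiv i k hg _)).deriv.symm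

theorem norm_foldr_iterate_cpderiv_mul_prod_le (ν : Fin n → ℕ) {r : Fin n → ℝ}
    (hr : ∀ j, 0 ≤ r j) {L : List (Fin n)} (hL : L.Nodup) {f : ℂⁿ → ℂ} (hf : Differentiable ℂ f)
    (z : ℂⁿ) {B : ℝ}
    (hB : ∀ w : ℂⁿ, (∀ j ∈ L, ‖w j - z j‖ = r j) → (∀ j ∉ L, w j = z j) → ‖f w‖ ≤ B) :
    ‖L.foldr (fun i g => (fun h => cpderiv i h)^[ν i] g) f z‖ * (L.map fun j => r j ^ ν j).prod ≤
      (L.map fun j => ((ν j)! : ℝ)).prod * B := by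
  induction L generalizing z B with
  | nil => simpa using hB z (by simp) (by simp)
  | cons i L ih =>
    obtain ⟨hiL, hL⟩ := List.nodup_cons.1 hL
    set g := L.foldr (fun i g => (fun h => cpderiv i h)^[ν i] g) f
    set P := (L.map fun j => r j ^ ν j).prod
    set N := (L.map fun j => ((ν j)! : ℝ)).prod
    have hP : 0 ≤ P := List.prod_nonneg fun _ hx => by
      obtain ⟨j, -, rfl⟩ := List.mem_map.1 hx
      exact pow_nonneg (hr j) _
    -- Multiplying by `P` instead of dividing by it keeps vanishing radii harmless.
    have hslice : ∀ u ∈ sphere (0 : ℂ) (r i),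
        ‖(P : ℂ) • g (z + u • EuclideanSpace.single i 1)‖ ≤ N * B := by
      intro u hu
      rw [norm_smul, Complex.norm_real, Real.norm_of_nonneg hP, mul_comm]
      refine ih hL _ fun w hwL hw => hB w (fun j hj => ?_) fun j hj => ?_
      · rcases List.mem_cons.1 hj with rfl | hjL
        · simpa [hw j hiL] using hu
        · have hji : j ≠ i := by rintro rfl; exact hiL hjL
          simpa [hji] using hwL j hjL
      · rw [List.mem_cons, not_or] at hj
        simpa [hj.1] using hw j hj.2
    have hg : Differentiable ℂ g := differentiable_foldr_iterate_cpderiv ν L hf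
    have hcauchy := norm_iteratedDeriv_mul_pow_le
      (fun u => (hasDerivAt_comp_add_smul (hg _)).differentiableAt.const_smul (P : ℂ))
      (hr i) hslice (ν i)
    rw [iteratedDeriv_const_smul_field, norm_smul, Complex.norm_real, Real.norm_of_nonneg hP,
      ← iterate_cpderiv_apply_add_smul_single i (ν i) hg, zero_smul, add_zero] at hcauchy
    simp only [List.foldr_cons, List.map_cons, List.prod_cons]
    calc _ = P * ‖(fun h => cpderiv i h)^[ν i] g z‖ * r i ^ ν i := by ring
      _ ≤ (ν i)! * (N * B) := hcauchy
      _ = _ := by ring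

theorem norm_mderiv_zero_mul_prod_le (ν : Fin n → ℕ) {f : ℂⁿ → ℂ} (hf : Differentiable ℂ f)
    (z : ℂⁿ) {B : ℝ} (hB : ∀ w : ℂⁿ, ‖w‖ = ‖z‖ → ‖f w‖ ≤ B) :
    ‖mderiv ν f 0‖ * ∏ j, ‖z j‖ ^ ν j ≤ (∏ j, ((ν j)! : ℝ)) * B := by
  have htorus : ∀ w : ℂⁿ, (∀ j ∈ List.finRange n, ‖w j - (0 : ℂⁿ) j‖ = ‖z j‖) →
      (∀ j ∉ List.finRange n, w j = (0 : ℂⁿ) j) → ‖f w‖ ≤ B :=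
    fun w hw _ => hB w <| by
      simp only [EuclideanSpace.norm_eq]
      congr! 3 with j
      simpa using hw j (List.mem_finRange j)
  simpa only [mderiv, Fin.prod_univ_def] using norm_foldr_iterate_cpderiv_mul_prod_le ν
    (fun j => norm_nonneg (z j)) (List.nodup_finRange n) hf 0 htorus

end PartialDerivatives

theorem statement_16 (n : ℕ) (α : ℝ) :
    ∃ C : ℝ, 0 < C ∧ ∀ (ν : Fin n → ℕ) (f : EuclideanSpace ℂ (Fin n) → ℂ),
      Differentiable ℂ f → ∀ M : ℝ,
      (∀ z : EuclideanSpace ℂ (Fin n),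
        ‖f z‖ * Real.exp (-(‖z‖ ^ 2 / 2)) * (1 + ‖z‖) ^ (-α) ≤ M) →
      (‖mderiv ν f 0‖ / ∏ j, (Nat.factorial (ν j) : ℝ)) *
          (⨆ z : EuclideanSpace ℂ (Fin n),
            (∏ j, ‖z j‖ ^ (ν j)) * Real.exp (-(‖z‖ ^ 2 / 2)) *
              (1 + ‖z‖) ^ (-α))
        ≤ C * M := by
  refine ⟨1, one_pos, fun ν f hf M hM => ?_⟩
  rw [one_mul, Real.mul_iSup_of_nonneg (by positivity)]
  refine ciSup_le fun z => ?_
  set W := Real.exp (-(‖z‖ ^ 2 / 2)) * (1 + ‖z‖) ^ (-α) with hW_def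
  have hW : 0 < W := by positivity
  have hcauchy := norm_mderiv_zero_mul_prod_le ν hf z (B := M / W) fun w hw => by
    rw [le_div_iff₀ hW, hW_def, ← hw, ← mul_assoc]
    exact hM w
  have hN : 0 < ∏ j, ((ν j)! : ℝ) := by positivity
  rw [mul_assoc _ (Real.exp _), ← hW_def]
  calc _ = ‖mderiv ν f 0‖ * (∏ j, ‖z j‖ ^ ν j) / (∏ j, ((ν j)! : ℝ)) * W := by ring
    _ ≤ (∏ j, ((ν j)! : ℝ)) * (M / W) / (∏ j, ((ν j)! : ℝ)) * W := by gcongr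
    _ = M := by field_simp
end

section
/- Let 0 < p < ∞, r > 0, α real, and suppose μ is a positive Borel measure on ℂⁿ that is a Carleson measure for F^p_α, i.e. there is C > 0 with ∫ |f(z)|^p e^{−p|z|²/2} dμ(z) ≤ C ‖f‖_{F^p_α}^p for all f ∈ F^p_α. Then there is a constant C' > 0 such that μ[B(z,r)] ≤ C' (1+|z|)^{−α} for all z ∈ ℂⁿ. -/
/-!
Test the Carleson inequality against the normalized Fock kernel `f_w`. Since
`|f_w(z)|^p e^{-p|z|²/2} = e^{-p|z-w|²/2}`, this weight is at least `e^{-pr²/2}` on `B(w, r)`,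
which bounds `μ(B(w, r))` by the left-hand side. On the right-hand side, Peetre's inequality
`(1+|z|)^{-α} ≤ (1+|w|)^{-α} (1+|z-w|)^{|α|}` and the absorption of `(1+|z-w|)^{|α|}` into half
of the Gaussian give `‖f_w‖^p_{F^p_α} ≲ (1+|w|)^{-α}`.
-/

open MeasureTheory

open Real InnerProductSpace

lemma rpow_neg_le_mul_rpow_abs_of_abs_log_sub_le {x y t : ℝ} (hx : 0 < x) (hy : 0 < y)
    (ht : 0 < t) (hxy : |log x - log y| ≤ log t) (α : ℝ) :
    x ^ (-α) ≤ y ^ (-α) * t ^ |α| := by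
  rw [rpow_def_of_pos hx, rpow_def_of_pos hy, rpow_def_of_pos ht, ← exp_add, exp_le_exp]
  have : -α * (log x - log y) ≤ |α| * log t := by
    calc -α * (log x - log y) ≤ |-α * (log x - log y)| := le_abs_self _
      _ = |α| * |log x - log y| := by rw [abs_mul, abs_neg]
      _ ≤ |α| * log t := by gcongr
  linarith

lemma one_add_norm_rpow_neg_le {F : Type*} [SeminormedAddCommGroup F] (z w : F) (α : ℝ) :
    (1 + ‖z‖) ^ (-α) ≤ (1 + ‖w‖) ^ (-α) * (1 + ‖z - w‖) ^ |α| := by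
  refine rpow_neg_le_mul_rpow_abs_of_abs_log_sub_le (by positivity) (by positivity)
    (by positivity) ?_ α
  have hzw := norm_le_norm_add_norm_sub' z w
  have hwz := norm_le_norm_add_norm_sub' w z
  rw [norm_sub_rev] at hwz
  rw [abs_sub_le_iff, sub_le_iff_le_add, sub_le_iff_le_add, ← log_mul (by positivity)
    (by positivity), ← log_mul (by positivity) (by positivity)]
  constructor <;> apply log_le_log (by positivity) <;> nlinarith [norm_nonneg z, norm_nonneg w,
    norm_nonneg (z - w)]

lemma one_add_rpow_mul_exp_neg_sq_le {p d : ℝ} (hp : 0 < p) (hd : 0 ≤ d) (α : ℝ) :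
    (1 + d) ^ |α| * exp (-(p * d ^ 2 / 2)) ≤ exp (α ^ 2 / p) * exp (-(p / 4 * d ^ 2)) := by
  have hpow : (1 + d) ^ |α| ≤ exp (d * |α|) := by
    calc (1 + d) ^ |α| ≤ exp d ^ |α| := by gcongr; linarith [add_one_le_exp d]
      _ = exp (d * |α|) := (exp_mul d |α|).symm
  have hquad : d * |α| - p * d ^ 2 / 2 ≤ α ^ 2 / p - p / 4 * d ^ 2 := by
    have h : α ^ 2 / p * p = |α| ^ 2 := by rw [sq_abs, div_mul_cancel₀ _ hp.ne']
    nlinarith [sq_nonneg (p * d / 2 - |α|)]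
  calc (1 + d) ^ |α| * exp (-(p * d ^ 2 / 2)) ≤ exp (d * |α|) * exp (-(p * d ^ 2 / 2)) := by
        gcongr
    _ ≤ exp (α ^ 2 / p) * exp (-(p / 4 * d ^ 2)) := by
        rw [← exp_add, ← exp_add]; exact exp_le_exp.mpr (by linarith)

lemma lintegral_ofReal_exp_neg_mul_sq_norm_sub {V : Type*} [NormedAddCommGroup V]
    [InnerProductSpace ℝ V] [FiniteDimensional ℝ V] [MeasurableSpace V] [BorelSpace V]
    {b : ℝ} (hb : 0 < b) (w : V) :
    ∫⁻ v, ENNReal.ofReal (exp (-b * ‖v - w‖ ^ 2)) =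
      ENNReal.ofReal ((π / b) ^ (Module.finrank ℝ V / 2 : ℝ)) := by
  have hval := GaussianFourier.integral_rexp_neg_mul_sq_norm (V := V) hb
  have hint : Integrable fun v : V => exp (-b * ‖v‖ ^ 2) :=
    .of_integral_ne_zero (by rw [hval]; positivity)
  rw [lintegral_sub_right_eq_self (fun v => ENNReal.ofReal (exp (-b * ‖v‖ ^ 2))) w,
    ← ofReal_integral_eq_lintegral_ofReal hint (.of_forall fun v => (exp_pos _).le), hval]

section FockKernel

variable {E : Type*} [NormedAddCommGroup E] [InnerProductSpace ℂ E]

/-- `⟪w, z⟫_ℂ = z · w̄`: Mathlib's inner product is conjugate-linear in its first argument. -/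
noncomputable def fockKernel (w z : E) : ℂ :=
  Complex.exp (⟪w, z⟫_ℂ - (‖w‖ ^ 2 / 2 : ℝ))

lemma differentiable_fockKernel (w : E) : Differentiable ℂ (fockKernel w) :=
  ((innerSL ℂ w).differentiable.sub_const _).cexp

lemma norm_fockKernel (w z : E) : ‖fockKernel w z‖ = exp (‖z‖ ^ 2 / 2 - ‖z - w‖ ^ 2 / 2) := by
  rw [fockKernel, Complex.norm_exp, Complex.sub_re, Complex.ofReal_re, norm_sub_sq (𝕜 := ℂ),
    inner_re_symm (𝕜 := ℂ), RCLike.re_to_complex]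
  ring_nf

lemma norm_fockKernel_rpow_mul_exp (p : ℝ) (w z : E) :
    ‖fockKernel w z‖ ^ p * exp (-(p * ‖z‖ ^ 2 / 2)) = exp (-(p * ‖z - w‖ ^ 2 / 2)) := by
  rw [norm_fockKernel, ← exp_mul, ← exp_add]
  ring_nf

lemma norm_fockKernel_rpow_mul_weight_le {p : ℝ} (hp : 0 < p) (α : ℝ) (w z : E) :
    ‖fockKernel w z‖ ^ p * exp (-(p * ‖z‖ ^ 2 / 2)) * (1 + ‖z‖) ^ (-α) ≤
      (1 + ‖w‖) ^ (-α) * exp (α ^ 2 / p) * exp (-(p / 4) * ‖z - w‖ ^ 2) := by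
  rw [norm_fockKernel_rpow_mul_exp]
  calc exp (-(p * ‖z - w‖ ^ 2 / 2)) * (1 + ‖z‖) ^ (-α)
      ≤ exp (-(p * ‖z - w‖ ^ 2 / 2)) * ((1 + ‖w‖) ^ (-α) * (1 + ‖z - w‖) ^ |α|) := by
        gcongr; exact one_add_norm_rpow_neg_le z w α
    _ = (1 + ‖w‖) ^ (-α) * ((1 + ‖z - w‖) ^ |α| * exp (-(p * ‖z - w‖ ^ 2 / 2))) := by ring
    _ ≤ (1 + ‖w‖) ^ (-α) * (exp (α ^ 2 / p) * exp (-(p / 4 * ‖z - w‖ ^ 2))) := by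
        gcongr ?_ * ?_
        exact one_add_rpow_mul_exp_neg_sq_le hp (norm_nonneg (z - w)) α
    _ = (1 + ‖w‖) ^ (-α) * exp (α ^ 2 / p) * exp (-(p / 4) * ‖z - w‖ ^ 2) := by ring_nf

lemma measure_ball_le_lintegral_fockKernel [MeasurableSpace E] [OpensMeasurableSpace E]
    (μ : Measure E) {p : ℝ} (hp : 0 ≤ p) (w : E) (r : ℝ) :
    μ (Metric.ball w r) ≤ ENNReal.ofReal (exp (p * r ^ 2 / 2)) *
      ∫⁻ z, ENNReal.ofReal (‖fockKernel w z‖ ^ p * exp (-(p * ‖z‖ ^ 2 / 2))) ∂μ := by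
  calc μ (Metric.ball w r) = ∫⁻ _ in Metric.ball w r, 1 ∂μ := by rw [setLIntegral_one]
    _ ≤ ∫⁻ z in Metric.ball w r, ENNReal.ofReal (exp (p * r ^ 2 / 2)) *
          ENNReal.ofReal (‖fockKernel w z‖ ^ p * exp (-(p * ‖z‖ ^ 2 / 2))) ∂μ := by
        refine setLIntegral_mono' Metric.isOpen_ball.measurableSet fun z hz => ?_
        have hzw : ‖z - w‖ ^ 2 ≤ r ^ 2 := by
          rw [Metric.mem_ball, dist_eq_norm] at hz
          exact pow_le_pow_left₀ (norm_nonneg _) hz.le 2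
        rw [norm_fockKernel_rpow_mul_exp, ← ENNReal.ofReal_mul (exp_pos _).le, ← exp_add,
          ENNReal.one_le_ofReal, one_le_exp_iff]
        nlinarith
    _ ≤ ENNReal.ofReal (exp (p * r ^ 2 / 2)) *
          ∫⁻ z, ENNReal.ofReal (‖fockKernel w z‖ ^ p * exp (-(p * ‖z‖ ^ 2 / 2))) ∂μ := by
        rw [lintegral_const_mul' _ _ ENNReal.ofReal_ne_top]
        gcongr
        exact Measure.restrict_le_self

end FockKernel

lemma lintegral_fockKernel_weighted_le (n : ℕ) {p : ℝ} (hp : 0 < p) (α : ℝ)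
    (w : EuclideanSpace ℂ (Fin n)) :
    ∫⁻ z, ENNReal.ofReal (‖fockKernel w z‖ ^ p * exp (-(p * ‖z‖ ^ 2 / 2)) * (1 + ‖z‖) ^ (-α)) ≤
      ENNReal.ofReal ((1 + ‖w‖) ^ (-α) * exp (α ^ 2 / p) *
        (π / (p / 4)) ^ (Module.finrank ℝ (EuclideanSpace ℂ (Fin n)) / 2 : ℝ)) := by
  have hc : 0 ≤ (1 + ‖w‖) ^ (-α) * exp (α ^ 2 / p) := by positivity
  calc _ ≤ ∫⁻ z, ENNReal.ofReal ((1 + ‖w‖) ^ (-α) * exp (α ^ 2 / p)) *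
          ENNReal.ofReal (exp (-(p / 4) * ‖z - w‖ ^ 2)) := by
        refine lintegral_mono fun z => ?_
        rw [← ENNReal.ofReal_mul hc]
        exact ENNReal.ofReal_le_ofReal (norm_fockKernel_rpow_mul_weight_le hp α w z)
    _ = _ := by
        rw [lintegral_const_mul' _ _ ENNReal.ofReal_ne_top,
          lintegral_ofReal_exp_neg_mul_sq_norm_sub (by positivity), ← ENNReal.ofReal_mul hc]

theorem statement_18_general (n : ℕ) (p r α : ℝ) (hp : 0 < p)
    (μ : Measure (EuclideanSpace ℂ (Fin n))) (C : ℝ) (hC : 0 < C)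
    (hCarleson : ∀ f : EuclideanSpace ℂ (Fin n) → ℂ, Differentiable ℂ f →
      (∫⁻ z, ENNReal.ofReal (‖f z‖ ^ p * Real.exp (-(p * ‖z‖ ^ 2 / 2))) ∂μ)
        ≤ ENNReal.ofReal C *
          ∫⁻ z, ENNReal.ofReal (‖f z‖ ^ p * Real.exp (-(p * ‖z‖ ^ 2 / 2)) *
            (1 + ‖z‖) ^ (-α))) :
    ∃ C' : ℝ, 0 < C' ∧ ∀ z : EuclideanSpace ℂ (Fin n),
      μ (Metric.ball z r) ≤ ENNReal.ofReal (C' * (1 + ‖z‖) ^ (-α)) := by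
  set K := (π / (p / 4)) ^ (Module.finrank ℝ (EuclideanSpace ℂ (Fin n)) / 2 : ℝ)
  refine ⟨exp (p * r ^ 2 / 2) * C * exp (α ^ 2 / p) * K, by positivity, fun w => ?_⟩
  calc μ (Metric.ball w r)
      ≤ ENNReal.ofReal (exp (p * r ^ 2 / 2)) * (ENNReal.ofReal C *
          ENNReal.ofReal ((1 + ‖w‖) ^ (-α) * exp (α ^ 2 / p) * K)) := by
        refine (measure_ball_le_lintegral_fockKernel μ hp.le w r).trans ?_
        gcongr
        exact (hCarleson _ (differentiable_fockKernel w)).trans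
          (by gcongr; exact lintegral_fockKernel_weighted_le n hp α w)
    _ = ENNReal.ofReal (exp (p * r ^ 2 / 2) * C * exp (α ^ 2 / p) * K * (1 + ‖w‖) ^ (-α)) := by
        rw [← ENNReal.ofReal_mul hC.le, ← ENNReal.ofReal_mul (exp_pos _).le]
        congr 1
        ring

theorem statement_18 (n : ℕ) (p r α : ℝ) (hp : 0 < p) (hr : 0 < r)
    (μ : Measure (EuclideanSpace ℂ (Fin n))) (C : ℝ) (hC : 0 < C)
    (hCarleson : ∀ f : EuclideanSpace ℂ (Fin n) → ℂ, Differentiable ℂ f →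
      (∫⁻ z, ENNReal.ofReal (‖f z‖ ^ p * Real.exp (-(p * ‖z‖ ^ 2 / 2))) ∂μ)
        ≤ ENNReal.ofReal C *
          ∫⁻ z, ENNReal.ofReal (‖f z‖ ^ p * Real.exp (-(p * ‖z‖ ^ 2 / 2)) *
            (1 + ‖z‖) ^ (-α))) :
    ∃ C' : ℝ, 0 < C' ∧ ∀ z : EuclideanSpace ℂ (Fin n),
      μ (Metric.ball z r) ≤ ENNReal.ofReal (C' * (1 + ‖z‖) ^ (-α)) :=
  statement_18_general n p r α hp μ C hC hCarleson
end
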